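/- arXiv:2501.09346 — 2 statements merged into one kernel-verified Lean document; each statement's English description precedes it below -/
import Mathlib

section
/- Let α > 0 and β, Z̄ ≥ 0, and let {Zᵥ}_{ν≥0} be a sequence of continuous non-negative real-valued functions on [0,T] satisfying Z₀(τ) ≤ Z̄·e^{ατ} for all τ ∈ [0,T], and satisfying the recurrent integral inequality Zᵥ(τ) ≤ ∫₀^τ [α·Zᵥ(η) + β·Z_{ν−1}(η)] dη for all ν ≥ 1 and τ ∈ [0,T]. Then for every ν ≥ 1 and every τ ∈ [0,T], Zᵥ(τ) ≤ (βτ)^ν · e^{ατ} / ν! · Z̄. -/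
/-!
The functions `w ν t = (β t)^ν e^{α t} / ν! · Z̄` solve the recurrence with equality:
`w (ν+1) τ = ∫₀^τ (α w (ν+1) + β w ν)`. Hence, by induction on `ν`, the difference
`u = Z (ν+1) - w (ν+1)` satisfies `u τ ≤ ∫₀^τ α u`. The primitive `F τ = ∫₀^τ α u` then has
`F' = α u ≤ α F` and `F 0 = 0`, so Grönwall's inequality gives `F ≤ 0`, whence `u ≤ F ≤ 0`.
-/

open Set Real Filter Topology MeasureTheory intervalIntegral Nat

theorem le_zero_of_le_integral_const_mul {a b α : ℝ} {u : ℝ → ℝ} (hα : 0 ≤ α)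
    (hu : ContinuousOn u (Icc a b)) (h : ∀ τ ∈ Icc a b, u τ ≤ ∫ η in a..τ, α * u η) :
    ∀ τ ∈ Icc a b, u τ ≤ 0 := by
  intro τ hτ
  set F : ℝ → ℝ := fun τ => ∫ η in a..τ, α * u η
  have hαu : ContinuousOn (fun η => α * u η) (Icc a b) := continuousOn_const.mul hu
  have hF : ContinuousOn F (Icc a b) := by
    rw [← uIcc_of_le (hτ.1.trans hτ.2)] at hαu ⊢
    exact continuousOn_primitive_interval (ContinuousOn.integrableOn_compact isCompact_uIcc hαu)
  have hF' : ∀ x ∈ Ico a b, HasDerivWithinAt F (α * u x) (Ici x) x := by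
    intro x hx
    have hmem : Icc a b ∈ 𝓝[≥] x :=
      mem_of_superset (Icc_mem_nhdsGE hx.2) (Icc_subset_Icc_left hx.1)
    exact integral_hasDerivWithinAt_right
      ((hαu.mono (Icc_subset_Icc_right hx.2.le)).intervalIntegrable_of_Icc hx.1)
      ((hαu.stronglyMeasurableAtFilter_nhdsWithin measurableSet_Icc x).filter_mono
        ((nhdsWithin_mono _ Ioi_subset_Ici_self).trans (nhdsWithin_le_of_mem hmem)))
      (((hαu x (Ico_subset_Icc_self hx)).mono_of_mem_nhdsWithin hmem).mono Ioi_subset_Ici_self)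
  have hFτ : F τ ≤ 0 := by
    simpa only [gronwallBound_ε0_δ0] using
      le_gronwallBound_of_liminf_deriv_right_le (K := α) (ε := 0) hF
        (fun x hx _ hr => (hF' x hx).liminf_right_slope_le hr) integral_same.le
        (fun x hx => (add_zero (α * F x)).symm ▸
          mul_le_mul_of_nonneg_left (h x (Ico_subset_Icc_self hx)) hα)
        τ hτ
  exact (h τ hτ).trans hFτ

theorem le_of_le_integral_of_integral_le {a b α : ℝ} {u v f g : ℝ → ℝ} (hα : 0 ≤ α)
    (hu : ContinuousOn u (Icc a b)) (hv : ContinuousOn v (Icc a b))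
    (hf : ContinuousOn f (Icc a b)) (hg : ContinuousOn g (Icc a b))
    (hfg : ∀ x ∈ Icc a b, f x ≤ g x)
    (hsub : ∀ τ ∈ Icc a b, u τ ≤ ∫ η in a..τ, α * u η + f η)
    (hsuper : ∀ τ ∈ Icc a b, ∫ η in a..τ, α * v η + g η ≤ v τ) :
    ∀ τ ∈ Icc a b, u τ ≤ v τ := by
  suffices ∀ τ ∈ Icc a b, u τ - v τ ≤ 0 from fun τ hτ => sub_nonpos.1 (this τ hτ)
  refine le_zero_of_le_integral_const_mul hα (hu.sub hv) fun τ hτ => ?_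
  have hIcc : Icc a τ ⊆ Icc a b := Icc_subset_Icc_right hτ.2
  have hint {w : ℝ → ℝ} (hw : ContinuousOn w (Icc a b)) : IntervalIntegrable w volume a τ :=
    (hw.mono hIcc).intervalIntegrable_of_Icc hτ.1
  calc u τ - v τ ≤ (∫ η in a..τ, α * u η + f η) - ∫ η in a..τ, α * v η + g η :=
        sub_le_sub (hsub τ hτ) (hsuper τ hτ)
    _ = ∫ η in a..τ, α * (u η - v η) + (f η - g η) := by
        rw [← integral_sub (hint (w := fun η => α * u η + f η) (by fun_prop))
          (hint (w := fun η => α * v η + g η) (by fun_prop))]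
        congr 1 with η
        ring
    _ ≤ ∫ η in a..τ, α * (u η - v η) := by
        refine integral_mono_on hτ.1 (hint ?_) (hint ?_) fun x hx => ?_
        · fun_prop
        · fun_prop
        · linarith [hfg x (hIcc hx)]

noncomputable def recurrentBound (α β Zbar : ℝ) (ν : ℕ) (t : ℝ) : ℝ :=
  (β * t) ^ ν * exp (α * t) / ν ! * Zbar

section recurrentBound

variable (α β Zbar : ℝ) (ν : ℕ)

theorem continuous_recurrentBound : Continuous (recurrentBound α β Zbar ν) := by
  unfold recurrentBound
  fun_prop

theorem hasDerivAt_recurrentBound_succ (t : ℝ) :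
    HasDerivAt (recurrentBound α β Zbar (ν + 1))
      (α * recurrentBound α β Zbar (ν + 1) t + β * recurrentBound α β Zbar ν t) t := by
  have hpow : HasDerivAt (fun s => (β * s) ^ (ν + 1)) ((ν + 1 : ℕ) * (β * t) ^ ν * β) t := by
    simpa using ((hasDerivAt_id t).const_mul β).fun_pow (ν + 1)
  have hexp : HasDerivAt (fun s => exp (α * s)) (exp (α * t) * α) t := by
    simpa using ((hasDerivAt_id t).const_mul α).exp
  refine (((hpow.fun_mul hexp).div_const ((ν + 1)! : ℝ)).mul_const Zbar).congr_deriv ?_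
  simp only [recurrentBound, factorial_succ, cast_mul]
  field_simp
  ring

theorem integral_recurrentBound_succ (τ : ℝ) :
    ∫ η in (0 : ℝ)..τ, α * recurrentBound α β Zbar (ν + 1) η + β * recurrentBound α β Zbar ν η =
      recurrentBound α β Zbar (ν + 1) τ := by
  have hcont := continuous_recurrentBound α β Zbar
  rw [integral_eq_sub_of_hasDerivAt (fun t _ => hasDerivAt_recurrentBound_succ α β Zbar ν t)
    (Continuous.intervalIntegrable (by fun_prop) _ _)]
  simp [recurrentBound]

end recurrentBound

theorem recurrent_inequality_bound_general (T : ℝ) (α β Zbar : ℝ) (hα : 0 < α) (hβ : 0 ≤ β)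
    (Z : ℕ → ℝ → ℝ)
    (hcont : ∀ ν, ContinuousOn (Z ν) (Icc 0 T))
    (hZ0 : ∀ τ ∈ Icc 0 T, Z 0 τ ≤ Zbar * exp (α * τ))
    (hrec : ∀ ν : ℕ, 1 ≤ ν → ∀ τ ∈ Icc 0 T,
      Z ν τ ≤ ∫ η in (0:ℝ)..τ, (α * Z ν η + β * Z (ν - 1) η)) :
    ∀ ν : ℕ, 1 ≤ ν → ∀ τ ∈ Icc 0 T,
      Z ν τ ≤ (β * τ) ^ ν * exp (α * τ) / (Nat.factorial ν) * Zbar := by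
  suffices ∀ ν, ∀ τ ∈ Icc 0 T, Z ν τ ≤ recurrentBound α β Zbar ν τ from fun ν _ => this ν
  intro ν
  induction ν with
  | zero => simpa [recurrentBound, mul_comm] using hZ0
  | succ ν ih =>
    have hw := continuous_recurrentBound α β Zbar
    exact le_of_le_integral_of_integral_le hα.le (hcont (ν + 1)) (hw (ν + 1)).continuousOn
      ((hcont ν).const_mul β) ((hw ν).continuousOn.const_mul β)
      (fun x hx => mul_le_mul_of_nonneg_left (ih x hx) hβ)
      (fun τ hτ => by simpa using hrec (ν + 1) ν.succ_pos τ hτ)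
      (fun τ _ => (integral_recurrentBound_succ α β Zbar ν τ).le)

/-- If continuous non-negative functions `Zᵥ` on `[0,T]` satisfy `Z₀(τ) ≤ Z̄ e^{ατ}` and the
recurrent inequality `Zᵥ(τ) ≤ ∫₀^τ [α Zᵥ(η) + β Z_{ν−1}(η)] dη` for `ν ≥ 1`, then
`Zᵥ(τ) ≤ (βτ)^ν e^{ατ} / ν! ⋅ Z̄` for all `ν ≥ 1`. -/
theorem recurrent_inequality_bound (T : ℝ) (α β Zbar : ℝ) (hα : 0 < α) (hβ : 0 ≤ β)
    (hZbar : 0 ≤ Zbar) (Z : ℕ → ℝ → ℝ)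
    (hcont : ∀ ν, ContinuousOn (Z ν) (Icc 0 T))
    (hnonneg : ∀ ν, ∀ τ ∈ Icc 0 T, 0 ≤ Z ν τ)
    (hZ0 : ∀ τ ∈ Icc 0 T, Z 0 τ ≤ Zbar * exp (α * τ))
    (hrec : ∀ ν : ℕ, 1 ≤ ν → ∀ τ ∈ Icc 0 T,
      Z ν τ ≤ ∫ η in (0:ℝ)..τ, (α * Z ν η + β * Z (ν - 1) η)) :
    ∀ ν : ℕ, 1 ≤ ν → ∀ τ ∈ Icc 0 T,
      Z ν τ ≤ (β * τ) ^ ν * exp (α * τ) / (Nat.factorial ν) * Zbar :=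
  recurrent_inequality_bound_general T α β Zbar hα hβ Z hcont hZ0 hrec
end

section
/- Let α > 0 and β, Z̄ ≥ 0, and let {Zᵥ}_{ν≥0} be a sequence of continuous non-negative real-valued functions on [0,T] satisfying Z₀(τ) ≤ Z̄·e^{ατ} for all τ ∈ [0,T], and satisfying the recurrent integral inequality Zᵥ(τ) ≤ ∫₀^τ [α·Zᵥ(η) + β·Z_{ν−1}(η)] dη for all ν ≥ 1 and τ ∈ [0,T]. Then the series Σ_{ν=0}^∞ Zᵥ(τ) converges for every τ ∈ [0,T] and satisfies Σ_{ν=0}^∞ Zᵥ(τ) ≤ e^{(α+β)τ} · Z̄. -/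
open Set Real

open MeasureTheory intervalIntegral in
lemma gron_aux (T α : ℝ) (hT : 0 ≤ T) (hα : 0 ≤ α) (Z g : ℝ → ℝ)
    (hZ : ContinuousOn Z (Icc 0 T)) (hg : ContinuousOn g (Icc 0 T))
    (hineq : ∀ τ ∈ Icc 0 T, Z τ ≤ ∫ η in (0:ℝ)..τ, (α * Z η + g η)) :
    ∀ τ ∈ Icc 0 T, Z τ ≤ exp (α * τ) * ∫ η in (0:ℝ)..τ, exp (-α * η) * g η := by
  set φ : ℝ → ℝ := fun η => α * Z η + g η with hφdef
  have hφ : ContinuousOn φ (Icc 0 T) := (continuousOn_const.mul hZ).add hg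
  set ψ : ℝ → ℝ := fun η => exp (-α * η) * g η with hψdef
  have hψ : ContinuousOn ψ (Icc 0 T) :=
    (((continuous_const.mul continuous_id).rexp).continuousOn).mul hg
  set F : ℝ → ℝ := fun t => ∫ η in (0:ℝ)..t, φ η with hFdef
  set G : ℝ → ℝ := fun t => ∫ η in (0:ℝ)..t, ψ η with hGdef
  have huIcc : uIcc (0:ℝ) T = Icc 0 T := uIcc_of_le hT
  have hφint : IntervalIntegrable φ volume 0 T := by
    apply ContinuousOn.intervalIntegrable; rwa [huIcc]
  have hψint : IntervalIntegrable ψ volume 0 T := by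
    apply ContinuousOn.intervalIntegrable; rwa [huIcc]
  have hFc : ContinuousOn F (Icc 0 T) := by
    rw [← huIcc]
    exact intervalIntegral.continuousOn_primitive_interval' hφint
      (by rw [huIcc]; exact ⟨le_refl 0, hT⟩)
  have hGc : ContinuousOn G (Icc 0 T) := by
    rw [← huIcc]
    exact intervalIntegral.continuousOn_primitive_interval' hψint
      (by rw [huIcc]; exact ⟨le_refl 0, hT⟩)
  set H : ℝ → ℝ := fun t => exp (-α * t) * F t - G t with hHdef
  have hderiv : ∀ x ∈ Ioo (0:ℝ) T,
      HasDerivAt H ((-α * exp (-α * x)) * F x + exp (-α * x) * φ x - ψ x) x := by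
    intro x hx
    have hxIcc : x ∈ Icc 0 T := Ioo_subset_Icc_self hx
    have hmemnhds : Icc (0:ℝ) T ∈ nhds x := Icc_mem_nhds hx.1 hx.2
    have hφca : ContinuousAt φ x := (hφ x hxIcc).continuousAt hmemnhds
    have hψca : ContinuousAt ψ x := (hψ x hxIcc).continuousAt hmemnhds
    have hsm : StronglyMeasurableAtFilter φ (nhds x) volume :=
      ContinuousOn.stronglyMeasurableAtFilter isOpen_Ioo (hφ.mono Ioo_subset_Icc_self) x hx
    have hsmψ : StronglyMeasurableAtFilter ψ (nhds x) volume :=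
      ContinuousOn.stronglyMeasurableAtFilter isOpen_Ioo (hψ.mono Ioo_subset_Icc_self) x hx
    have hsub : uIcc (0:ℝ) x ⊆ uIcc (0:ℝ) T := by
      rw [huIcc, uIcc_of_le hxIcc.1]; exact Icc_subset_Icc le_rfl hxIcc.2
    have hFd : HasDerivAt F (φ x) x :=
      intervalIntegral.integral_hasDerivAt_right (hφint.mono_set hsub) hsm hφca
    have hGd : HasDerivAt G (ψ x) x :=
      intervalIntegral.integral_hasDerivAt_right (hψint.mono_set hsub) hsmψ hψca
    have hE : HasDerivAt (fun t => exp (-α * t)) (-α * exp (-α * x)) x := by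
      simpa [mul_comm] using ((hasDerivAt_id x).const_mul (-α)).exp
    exact (hE.mul hFd).sub hGd
  have hHanti : AntitoneOn H (Icc 0 T) := by
    apply antitoneOn_of_deriv_nonpos (convex_Icc 0 T)
    · exact ((((continuous_const.mul continuous_id).rexp).continuousOn).mul hFc).sub hGc
    · rw [interior_Icc]
      intro x hx
      exact (hderiv x hx).differentiableAt.differentiableWithinAt
    · rw [interior_Icc]
      intro x hx
      rw [(hderiv x hx).deriv]
      have hxIcc : x ∈ Icc 0 T := Ioo_subset_Icc_self hx
      have hZF : Z x ≤ F x := hineq x hxIcc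
      have key : (-α * exp (-α * x)) * F x + exp (-α * x) * φ x - ψ x
          = α * exp (-α * x) * (Z x - F x) := by
        simp only [hφdef, hψdef]; ring
      rw [key]
      exact mul_nonpos_of_nonneg_of_nonpos (by positivity) (by linarith)
  intro τ hτ
  have h1 : H τ ≤ H 0 := hHanti (left_mem_Icc.2 hT) hτ hτ.1
  have h0 : H 0 = 0 := by simp [hHdef, hFdef, hGdef]
  rw [h0] at h1
  have h2 : exp (-α * τ) * F τ ≤ G τ := by
    have := h1
    simp only [hHdef, sub_nonpos] at this ⊢
    linarith
  have h3 : Z τ ≤ F τ := hineq τ hτ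
  have hmul : exp (α * τ) * exp (-α * τ) = 1 := by
    rw [neg_mul, exp_neg, mul_inv_cancel₀ (exp_ne_zero _)]
  have h4 := mul_le_mul_of_nonneg_left h2 (exp_pos (α * τ)).le
  rw [← mul_assoc, hmul, one_mul] at h4
  show Z τ ≤ exp (α * τ) * G τ
  exact h3.trans h4


/-- If continuous non-negative functions `Zᵥ` on `[0,T]` satisfy `Z₀(τ) ≤ Z̄ e^{ατ}` and the
recurrent inequality `Zᵥ(τ) ≤ ∫₀^τ [α Zᵥ(η) + β Z_{ν−1}(η)] dη` for `ν ≥ 1`, then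
`Σ_{ν=0}^∞ Zᵥ(τ)` converges and is bounded by `e^{(α+β)τ} Z̄`. -/
theorem recurrent_inequality_series (T : ℝ) (α β Zbar : ℝ) (hα : 0 < α) (hβ : 0 ≤ β)
    (hZbar : 0 ≤ Zbar) (Z : ℕ → ℝ → ℝ)
    (hcont : ∀ ν, ContinuousOn (Z ν) (Icc 0 T))
    (hnonneg : ∀ ν, ∀ τ ∈ Icc 0 T, 0 ≤ Z ν τ)
    (hZ0 : ∀ τ ∈ Icc 0 T, Z 0 τ ≤ Zbar * exp (α * τ))
    (hrec : ∀ ν : ℕ, 1 ≤ ν → ∀ τ ∈ Icc 0 T,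
      Z ν τ ≤ ∫ η in (0:ℝ)..τ, (α * Z ν η + β * Z (ν - 1) η)) :
    ∀ τ ∈ Icc 0 T, Summable (fun ν => Z ν τ) ∧
      ∑' ν : ℕ, Z ν τ ≤ exp ((α + β) * τ) * Zbar := by
  rcases le_or_gt 0 T with hT | hT
  swap
  · intro τ hτ; exact absurd (hτ.1.trans hτ.2) (not_le.2 hT)
  -- Main bound by induction
  have hbound : ∀ ν : ℕ, ∀ τ ∈ Icc 0 T,
      Z ν τ ≤ Zbar * exp (α * τ) * ((β * τ) ^ ν / (Nat.factorial ν)) := by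
    intro ν
    induction ν with
    | zero => intro τ hτ; simpa using hZ0 τ hτ
    | succ ν ih =>
      have hgron := gron_aux T α hT hα.le (Z (ν + 1)) (fun η => β * Z ν η)
        (hcont (ν + 1)) (continuousOn_const.mul (hcont ν))
        (by
          intro τ hτ
          have := hrec (ν + 1) (Nat.le_add_left 1 ν) τ hτ
          simpa using this)
      intro τ hτ
      have h1 := hgron τ hτ
      -- bound the integral
      have hτT := hτ.2
      have hτ0 := hτ.1
      have hintle : (∫ η in (0:ℝ)..τ, exp (-α * η) * (β * Z ν η))
          ≤ ∫ η in (0:ℝ)..τ, Zbar * β ^ (ν + 1) * η ^ ν / (Nat.factorial ν) := by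
        apply intervalIntegral.integral_mono_on hτ0
        · apply ContinuousOn.intervalIntegrable
          apply ContinuousOn.mul
          · exact ((continuous_const.mul continuous_id).rexp).continuousOn
          · apply continuousOn_const.mul
            apply (hcont ν).mono
            rw [uIcc_of_le hτ0]
            exact Icc_subset_Icc le_rfl hτT
        · apply ContinuousOn.intervalIntegrable
          exact Continuous.continuousOn (by continuity)
        · intro η hη
          have hηIcc : η ∈ Icc 0 T := ⟨hη.1, hη.2.trans hτT⟩
          have hIH := ih η hηIcc
          have hmul : exp (-α * η) * exp (α * η) = 1 := by
            rw [neg_mul, exp_neg, inv_mul_cancel₀ (exp_ne_zero _)]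
          have step : exp (-α * η) * (β * Z ν η)
              ≤ exp (-α * η) * (β * (Zbar * exp (α * η) * ((β * η) ^ ν / (Nat.factorial ν)))) := by
            apply mul_le_mul_of_nonneg_left _ (exp_pos _).le
            exact mul_le_mul_of_nonneg_left hIH hβ
          have eq2 : exp (-α * η) * (β * (Zbar * exp (α * η) * ((β * η) ^ ν / (Nat.factorial ν))))
              = Zbar * β ^ (ν + 1) * η ^ ν / (Nat.factorial ν) := by
            calc exp (-α * η) * (β * (Zbar * exp (α * η) * ((β * η) ^ ν / (Nat.factorial ν))))
                = (exp (-α * η) * exp (α * η)) * (Zbar * β ^ (ν + 1) * η ^ ν / (Nat.factorial ν)) := by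
                  rw [mul_pow, pow_succ]; ring
              _ = _ := by rw [hmul, one_mul]
          linarith [step, eq2.le]
      have hintval : (∫ η in (0:ℝ)..τ, Zbar * β ^ (ν + 1) * η ^ ν / (Nat.factorial ν))
          = Zbar * β ^ (ν + 1) * (τ ^ (ν + 1) / (ν + 1)) / (Nat.factorial ν) := by
        have : (fun η : ℝ => Zbar * β ^ (ν + 1) * η ^ ν / (Nat.factorial ν))
            = fun η : ℝ => (Zbar * β ^ (ν + 1) / (Nat.factorial ν)) * η ^ ν := by
          funext η; ring
        rw [this, intervalIntegral.integral_const_mul, integral_pow]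
        push_cast
        ring
      have h2 : Z (ν + 1) τ ≤ exp (α * τ) *
          (Zbar * β ^ (ν + 1) * (τ ^ (ν + 1) / (ν + 1)) / (Nat.factorial ν)) := by
        calc Z (ν + 1) τ ≤ exp (α * τ) * ∫ η in (0:ℝ)..τ, exp (-α * η) * (β * Z ν η) := h1
          _ ≤ _ := by
              apply mul_le_mul_of_nonneg_left _ (exp_pos _).le
              rw [← hintval]; exact hintle
      calc Z (ν + 1) τ ≤ _ := h2
        _ = Zbar * exp (α * τ) * ((β * τ) ^ (ν + 1) / (Nat.factorial (ν + 1))) := by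
            rw [Nat.factorial_succ, mul_pow]
            push_cast
            have hν : ((ν : ℝ) + 1) ≠ 0 := by positivity
            have hf : ((Nat.factorial ν : ℝ)) ≠ 0 := by
              exact_mod_cast Nat.factorial_ne_zero ν
            field_simp
  intro τ hτ
  have hb : Summable (fun ν : ℕ => Zbar * exp (α * τ) * ((β * τ) ^ ν / (Nat.factorial ν))) :=
    (Real.summable_pow_div_factorial (β * τ)).mul_left _
  have hsum : Summable (fun ν => Z ν τ) :=
    Summable.of_nonneg_of_le (fun ν => hnonneg ν τ hτ) (fun ν => hbound ν τ hτ) hb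
  refine ⟨hsum, ?_⟩
  have htsum : ∑' ν : ℕ, Z ν τ ≤
      ∑' ν : ℕ, Zbar * exp (α * τ) * ((β * τ) ^ ν / (Nat.factorial ν)) :=
    Summable.tsum_le_tsum (fun ν => hbound ν τ hτ) hsum hb
  have hexp : ∑' ν : ℕ, ((β * τ) ^ ν / (Nat.factorial ν) : ℝ) = exp (β * τ) := by
    rw [Real.exp_eq_exp_ℝ, NormedSpace.exp_eq_tsum_div]
  calc ∑' ν : ℕ, Z ν τ ≤ _ := htsum
    _ = Zbar * exp (α * τ) * exp (β * τ) := by rw [tsum_mul_left, hexp]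
    _ = exp ((α + β) * τ) * Zbar := by rw [mul_assoc, ← exp_add, add_mul]; ring
end
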